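/- For the 3-coloring encoding P(G) of a bidirected graph G: a set S of atoms is an answer set of P(G) if and only if the assignment c(u) = the unique color x with color(u,x) ∈ S is a proper 3-coloring of G; in particular P(G) has no answer set iff G is not 3-colorable. -/
import Mathlib


/-- The three colors. -/
inductive Col : Type where
  | r | g | b
deriving DecidableEq

/-- The atoms of the 3-coloring program over vertices `V`. -/
inductive Atm (V : Type) : Type where
  | edge : V → V → Atm V
  | color : V → Col → Atm V

/-- A rule `head ← pos, not neg`, where `head = none` encodes a constraint
`⊥ ← pos, not neg`. -/
structure CRule (A : Type) where
  head : Option A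
  pos : Set A
  neg : Set A

/-- `S` is an answer set of the program `P` (which may contain constraints):
`S` is the least set closed under the Gelfond–Lifschitz reduct of the
non-constraint rules of `P` with respect to `S`, and no constraint of `P` has
its body satisfied by `S`. -/
def AnswerSet {A : Type} (P : Set (CRule A)) (S : Set A) : Prop :=
  IsLeast {X | ∀ r ∈ P, r.neg ∩ S = ∅ → r.pos ⊆ X →
    ∀ a : A, r.head = some a → a ∈ X} S ∧
  ∀ r ∈ P, r.head = none → ¬ (r.pos ⊆ S ∧ r.neg ∩ S = ∅)

/-- The 3-coloring program `P(G)` of the graph with edge relation `E`: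
edge facts; for each vertex and color, the rule
`color(u,x) ← not color(u,y), not color(u,z)` (`y`, `z` the other colors);
and for each pair of vertices and each color, the constraint
`⊥ ← color(u,x), color(v,x), edge(u,v)`. -/
def PG {V : Type} (E : V → V → Prop) : Set (CRule (Atm V)) :=
  {r | ∃ u v, E u v ∧ r = ⟨some (.edge u v), ∅, ∅⟩} ∪
  {r | ∃ u x, r = ⟨some (.color u x), ∅, {a | ∃ y, y ≠ x ∧ a = .color u y}⟩} ∪
  {r | ∃ u v x, r = ⟨none, {.color u x, .color v x, .edge u v}, ∅⟩}

/-- answer sets of `P(G)` correspond exactly to proper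
3-colorings of `G`; in particular `P(G)` has no answer set iff `G` is not
3-colorable. -/
theorem threecoloring_correctness {V : Type} [Fintype V] (E : V → V → Prop) :
    (∀ S : Set (Atm V), AnswerSet (PG E) S ↔
      ∃ c : V → Col, (∀ u v, E u v → c u ≠ c v) ∧
        S = {a | ∃ u v, E u v ∧ a = .edge u v} ∪
            {a | ∃ u, a = .color u (c u)}) ∧
    ((¬ ∃ S : Set (Atm V), AnswerSet (PG E) S) ↔
      ¬ ∃ c : V → Col, ∀ u v, E u v → c u ≠ c v) := by
  have memEdge : ∀ u v, E u v →
      (⟨some (.edge u v), ∅, ∅⟩ : CRule (Atm V)) ∈ PG E :=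
    fun u v h => Or.inl (Or.inl ⟨u, v, h, rfl⟩)
  have memColor : ∀ (u : V) (x : Col),
      (⟨some (.color u x), ∅, {a | ∃ y, y ≠ x ∧ a = .color u y}⟩ : CRule (Atm V)) ∈ PG E :=
    fun u x => Or.inl (Or.inr ⟨u, x, rfl⟩)
  have memCon : ∀ (u v : V) (x : Col),
      (⟨none, {.color u x, .color v x, .edge u v}, ∅⟩ : CRule (Atm V)) ∈ PG E :=
    fun u v x => Or.inr ⟨u, v, x, rfl⟩
  have main : ∀ S : Set (Atm V), AnswerSet (PG E) S ↔
      ∃ c : V → Col, (∀ u v, E u v → c u ≠ c v) ∧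
        S = {a | ∃ u v, E u v ∧ a = .edge u v} ∪
            {a | ∃ u, a = .color u (c u)} := by
    intro S
    constructor
    · rintro ⟨⟨hcl, hlb⟩, hcon⟩
      have hedge : ∀ u v, E u v → Atm.edge u v ∈ S := by
        intro u v h
        exact hcl _ (memEdge u v h) (by simp) (by simp) _ rfl
      have hex : ∀ u, ∃ x, Atm.color u x ∈ S := by
        intro u
        by_contra h
        push_neg at h
        refine h Col.r (hcl _ (memColor u Col.r) ?_ (by simp) _ rfl)
        apply Set.eq_empty_iff_forall_notMem.mpr
        rintro a ⟨⟨y, hy, rfl⟩, hS⟩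
        exact h y hS
      have hsub : ∀ a ∈ S, (∃ u v, E u v ∧ a = Atm.edge u v) ∨
          (∃ u x, a = Atm.color u x ∧ a ∈ S) := by
        intro a haS
        have hT : ({a | ∃ u v, E u v ∧ a = Atm.edge u v} ∪
            {a | (∃ u x, a = Atm.color u x) ∧ a ∈ S} : Set (Atm V)) ∈
            {X | ∀ r ∈ PG E, r.neg ∩ S = ∅ → r.pos ⊆ X →
              ∀ a : Atm V, r.head = some a → a ∈ X} := by
          rintro r ((⟨u, v, hE, rfl⟩ | ⟨u, x, rfl⟩) | ⟨u, v, x, rfl⟩) hneg hpos b hb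
          · injection hb with hb; subst hb
            exact Or.inl ⟨u, v, hE, rfl⟩
          · injection hb with hb; subst hb
            exact Or.inr ⟨⟨u, x, rfl⟩, hcl _ (memColor u x) hneg (by simp) _ rfl⟩
          · cases hb
        have := hlb hT haS
        rcases this with h | ⟨h1, h2⟩
        · exact Or.inl h
        · rcases h1 with ⟨u, x, rfl⟩
          exact Or.inr ⟨u, x, rfl, h2⟩
      have huniq : ∀ u x y, Atm.color u x ∈ S → Atm.color u y ∈ S → x = y := by
        intro u x y hx hy
        by_contra hxy
        have hX : (S \ {Atm.color u x} : Set (Atm V)) ∈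
            {X | ∀ r ∈ PG E, r.neg ∩ S = ∅ → r.pos ⊆ X →
              ∀ a : Atm V, r.head = some a → a ∈ X} := by
          rintro r ((⟨u', v', hE, rfl⟩ | ⟨u', x', rfl⟩) | ⟨u', v', x', rfl⟩) hneg hpos b hb
          · injection hb with hb; subst hb
            exact ⟨hedge u' v' hE, by simp⟩
          · injection hb with hb; subst hb
            refine ⟨hcl _ (memColor u' x') hneg (by simp) _ rfl, ?_⟩
            intro hmem
            rw [Set.mem_singleton_iff] at hmem
            injection hmem with h1 h2
            have : Atm.color u' y ∈ ({a | ∃ z, z ≠ x' ∧ a = Atm.color u' z} : Set (Atm V)) ∩ S :=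
              ⟨⟨y, fun h => hxy (h2.symm.trans h.symm), rfl⟩, by rw [h1]; exact hy⟩
            rw [hneg] at this
            exact this
          · cases hb
        exact (hlb hX hx).2 rfl
      set c : V → Col := fun u => (hex u).choose with hc_def
      have hcS : ∀ u, Atm.color u (c u) ∈ S := fun u => (hex u).choose_spec
      refine ⟨c, ?_, ?_⟩
      · intro u v hE heq
        refine hcon _ (memCon u v (c u)) rfl ⟨?_, by simp⟩
        rintro a (rfl | rfl | rfl)
        · exact hcS u
        · rw [heq]; exact hcS v
        · exact hedge u v hE
      · ext a
        constructor
        · intro h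
          rcases hsub a h with ⟨u, v, hE, rfl⟩ | ⟨u, x, rfl, hS⟩
          · exact Or.inl ⟨u, v, hE, rfl⟩
          · exact Or.inr ⟨u, by rw [huniq u x (c u) hS (hcS u)]⟩
        · rintro (⟨u, v, hE, rfl⟩ | ⟨u, rfl⟩)
          · exact hedge u v hE
          · exact hcS u
    · rintro ⟨c, hc, rfl⟩
      have colS : ∀ (u : V) (x : Col),
          Atm.color u x ∈ ({a | ∃ u v, E u v ∧ a = Atm.edge u v} ∪
            {a | ∃ u, a = Atm.color u (c u)} : Set (Atm V)) → x = c u := by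
        rintro u x (⟨u', v', _, h⟩ | ⟨u', h⟩)
        · cases h
        · injection h with h1 h2; subst h1; exact h2
      have edgeS : ∀ (u v : V),
          Atm.edge u v ∈ ({a | ∃ u v, E u v ∧ a = Atm.edge u v} ∪
            {a | ∃ u, a = Atm.color u (c u)} : Set (Atm V)) → E u v := by
        rintro u v (⟨u', v', hE, h⟩ | ⟨u', h⟩)
        · injection h with h1 h2; subst h1; subst h2; exact hE
        · cases h
      refine ⟨⟨?_, ?_⟩, ?_⟩
      · rintro r ((⟨u, v, hE, rfl⟩ | ⟨u, x, rfl⟩) | ⟨u, v, x, rfl⟩) hneg hpos b hb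
        · injection hb with hb; subst hb
          exact Or.inl ⟨u, v, hE, rfl⟩
        · injection hb with hb; subst hb
          have hx : c u = x := by
            by_contra h
            have : Atm.color u (c u) ∈ ({a | ∃ y, y ≠ x ∧ a = Atm.color u y} : Set (Atm V)) ∩
                ({a | ∃ u v, E u v ∧ a = Atm.edge u v} ∪
                  {a | ∃ u, a = Atm.color u (c u)}) :=
              ⟨⟨c u, h, rfl⟩, Or.inr ⟨u, rfl⟩⟩
            rw [hneg] at this
            exact this
          subst hx
          exact Or.inr ⟨u, rfl⟩
        · cases hb
      · intro X hX a ha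
        rcases ha with ⟨u, v, hE, rfl⟩ | ⟨u, rfl⟩
        · exact hX _ (memEdge u v hE) (by simp) (by simp) _ rfl
        · refine hX _ (memColor u (c u)) ?_ (by simp) _ rfl
          apply Set.eq_empty_iff_forall_notMem.mpr
          rintro a ⟨⟨y, hy, rfl⟩, hS⟩
          exact hy (colS u y hS)
      · rintro r ((⟨u, v, hE, rfl⟩ | ⟨u, x, rfl⟩) | ⟨u, v, x, rfl⟩) hh ⟨hpos, _⟩
        · cases hh
        · cases hh
        · have h1 : x = c u := colS u x (hpos (Or.inl rfl))
          have h2 : x = c v := colS v x (hpos (Or.inr (Or.inl rfl)))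
          have h3 : E u v := edgeS u v (hpos (Or.inr (Or.inr rfl)))
          exact hc u v h3 (h1 ▸ h2)
  refine ⟨main, not_congr ?_⟩
  constructor
  · rintro ⟨S, hS⟩
    obtain ⟨c, hc, _⟩ := (main S).mp hS
    exact ⟨c, hc⟩
  · rintro ⟨c, hc⟩
    exact ⟨_, (main _).mpr ⟨c, hc, rfl⟩⟩
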